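/- arXiv:0904.4140 — 3 statements merged into one kernel-verified Lean document; each statement's English description precedes it below -/
import Mathlib

section
/- Let (X, Σ) be a measurable space, μ a measure on X, and f, g : X → ℝ nonnegative measurable functions that are integrable with respect to μ and satisfy ∫_X f dμ ≤ 1. Let n ≥ 1 and k be integers with 0 ≤ k ≤ n. Then for every measurable set E ⊆ X one has ∫_E f dμ − ∫_E f^(k/n) · g^((n−k)/n) dμ ≤ (∫_X |f − g| dμ)^((n−k)/n). -/
open MeasureTheory Real

/-! With `p = k/n` and `q = (n-k)/n`, split `f = f^p f^q`; then `f - f^p g^q = f^p (f^q - g^q)`,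
and `f^q - g^q ≤ |f - g|^q` since `t ↦ t^q` is subadditive for `q ≤ 1`. After enlarging `E` to the
whole space, Hölder's inequality with exponents `1/p`, `1/q` bounds `∫ f^p |f - g|^q` by
`(∫ f)^p (∫ |f - g|)^q ≤ (∫ |f - g|)^q`. -/

namespace Real

theorem rpow_sub_rpow_le_abs_sub_rpow {a b q : ℝ} (ha : 0 ≤ a) (hb : 0 ≤ b)
    (hq0 : 0 ≤ q) (hq1 : q ≤ 1) : a ^ q - b ^ q ≤ |a - b| ^ q := by
  rcases le_total b a with hba | hab
  · have h := rpow_add_le_add_rpow hb (sub_nonneg.2 hba) hq0 hq1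
    rw [add_sub_cancel, ← abs_of_nonneg (sub_nonneg.2 hba)] at h
    linarith
  · have h : a ^ q ≤ b ^ q := rpow_le_rpow ha hab hq0
    linarith [rpow_nonneg (abs_nonneg (a - b)) q]

theorem sub_rpow_mul_rpow_le {a b p q : ℝ} (ha : 0 ≤ a) (hb : 0 ≤ b)
    (hp : 0 ≤ p) (hq : 0 ≤ q) (hpq : p + q = 1) :
    a - a ^ p * b ^ q ≤ a ^ p * |a - b| ^ q := by
  have hsplit : a = a ^ p * a ^ q := by
    rw [← rpow_add' ha (by rw [hpq]; exact one_ne_zero), hpq, rpow_one]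
  calc a - a ^ p * b ^ q = a ^ p * (a ^ q - b ^ q) := by
        rw [mul_sub, ← hsplit]
    _ ≤ a ^ p * |a - b| ^ q :=
        mul_le_mul_of_nonneg_left (rpow_sub_rpow_le_abs_sub_rpow ha hb hq (by linarith))
          (rpow_nonneg ha p)

end Real

namespace MeasureTheory

variable {α : Type*} [MeasurableSpace α] {μ : Measure α} {u v : α → ℝ} {p q : ℝ}

theorem Integrable.rpow_mul_rpow (hu : Integrable u μ) (hv : Integrable v μ)
    (hu0 : 0 ≤ᵐ[μ] u) (hv0 : 0 ≤ᵐ[μ] v) (hp : 0 ≤ p) (hq : 0 ≤ q) (hpq : p + q = 1) :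
    Integrable (fun x => u x ^ p * v x ^ q) μ := by
  refine ((hu.const_mul p).add (hv.const_mul q)).mono'
    ((hu.aemeasurable.pow_const p).mul (hv.aemeasurable.pow_const q)).aestronglyMeasurable ?_
  filter_upwards [hu0, hv0] with x hux hvx
  rw [norm_of_nonneg (mul_nonneg (rpow_nonneg hux p) (rpow_nonneg hvx q))]
  exact geom_mean_le_arith_mean2_weighted hp hq hux hvx hpq

theorem integral_rpow_mul_rpow_le (hu : Integrable u μ) (hv : Integrable v μ)
    (hu0 : 0 ≤ᵐ[μ] u) (hv0 : 0 ≤ᵐ[μ] v) (hp : 0 ≤ p) (hq : 0 ≤ q) (hpq : p + q = 1) :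
    ∫ x, u x ^ p * v x ^ q ∂μ ≤ (∫ x, u x ∂μ) ^ p * (∫ x, v x ∂μ) ^ q := by
  have hofReal : ∀ {w z : ℝ}, 0 ≤ w → 0 ≤ z →
      ENNReal.ofReal (w ^ p * z ^ q) = ENNReal.ofReal w ^ p * ENNReal.ofReal z ^ q :=
    fun hw hz => by rw [ENNReal.ofReal_mul (rpow_nonneg hw p),
      ENNReal.ofReal_rpow_of_nonneg hw hp, ENNReal.ofReal_rpow_of_nonneg hz hq]
  have hmeas : AEMeasurable (fun x => u x ^ p * v x ^ q) μ :=
    (hu.aemeasurable.pow_const p).mul (hv.aemeasurable.pow_const q)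
  have hnonneg : 0 ≤ᵐ[μ] fun x => u x ^ p * v x ^ q := by
    filter_upwards [hu0, hv0] with x hux hvx
    exact mul_nonneg (rpow_nonneg hux p) (rpow_nonneg hvx q)
  rw [integral_eq_lintegral_of_nonneg_ae hnonneg hmeas.aestronglyMeasurable]
  refine ENNReal.toReal_le_of_le_ofReal (mul_nonneg (rpow_nonneg (integral_nonneg_of_ae hu0) p)
    (rpow_nonneg (integral_nonneg_of_ae hv0) q)) ?_
  calc ∫⁻ x, ENNReal.ofReal (u x ^ p * v x ^ q) ∂μ
      = ∫⁻ x, ENNReal.ofReal (u x) ^ p * ENNReal.ofReal (v x) ^ q ∂μ := by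
        refine lintegral_congr_ae ?_
        filter_upwards [hu0, hv0] with x hux hvx
        exact hofReal hux hvx
    _ ≤ (∫⁻ x, ENNReal.ofReal (u x) ∂μ) ^ p * (∫⁻ x, ENNReal.ofReal (v x) ∂μ) ^ q :=
        ENNReal.lintegral_mul_norm_pow_le hu.aemeasurable.ennreal_ofReal
          hv.aemeasurable.ennreal_ofReal hp hq hpq
    _ = ENNReal.ofReal ((∫ x, u x ∂μ) ^ p * (∫ x, v x ∂μ) ^ q) := by
        rw [← ofReal_integral_eq_lintegral_ofReal hu hu0,
          ← ofReal_integral_eq_lintegral_ofReal hv hv0,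
          hofReal (integral_nonneg_of_ae hu0) (integral_nonneg_of_ae hv0)]

end MeasureTheory

theorem per_set_estimate_general {X : Type*} [MeasurableSpace X] (μ : Measure X)
    (f g : X → ℝ)
    (hf0 : ∀ x, 0 ≤ f x) (hg0 : ∀ x, 0 ≤ g x)
    (hf_int : Integrable f μ) (hg_int : Integrable g μ)
    (hf1 : ∫ x, f x ∂μ ≤ 1)
    (n k : ℕ) (hn : 1 ≤ n) (hk : k ≤ n)
    (E : Set X) :
    (∫ x in E, f x ∂μ) -
        ∫ x in E, f x ^ ((k : ℝ) / n) * g x ^ (((n : ℝ) - k) / n) ∂μ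
      ≤ (∫ x, |f x - g x| ∂μ) ^ (((n : ℝ) - k) / n) := by
  set p : ℝ := k / n
  set q : ℝ := (n - k) / n
  have hp : 0 ≤ p := by positivity
  have hq : 0 ≤ q := div_nonneg (sub_nonneg.2 (by exact_mod_cast hk)) n.cast_nonneg
  have hpq : p + q = 1 := by
    rw [← add_div, add_sub_cancel, div_self (by exact_mod_cast Nat.one_le_iff_ne_zero.1 hn)]
  have hf_ae : 0 ≤ᵐ[μ] f := ae_of_all _ hf0
  have hd0 : 0 ≤ᵐ[μ] fun x => |f x - g x| := ae_of_all _ fun x => abs_nonneg _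
  have hd_int : Integrable (fun x => |f x - g x|) μ := (hf_int.sub hg_int).abs
  have hfg_int := hf_int.rpow_mul_rpow hg_int hf_ae (ae_of_all _ hg0) hp hq hpq
  have hfd_int := hf_int.rpow_mul_rpow hd_int hf_ae hd0 hp hq hpq
  calc (∫ x in E, f x ∂μ) - ∫ x in E, f x ^ p * g x ^ q ∂μ
      = ∫ x in E, (f x - f x ^ p * g x ^ q) ∂μ :=
        (integral_sub hf_int.restrict hfg_int.restrict).symm
    _ ≤ ∫ x in E, f x ^ p * |f x - g x| ^ q ∂μ :=
        integral_mono (hf_int.restrict.sub hfg_int.restrict) hfd_int.restrict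
          fun x => sub_rpow_mul_rpow_le (hf0 x) (hg0 x) hp hq hpq
    _ ≤ ∫ x, f x ^ p * |f x - g x| ^ q ∂μ :=
        setIntegral_le_integral hfd_int (ae_of_all _ fun x =>
          mul_nonneg (rpow_nonneg (hf0 x) p) (rpow_nonneg (abs_nonneg _) q))
    _ ≤ (∫ x, f x ∂μ) ^ p * (∫ x, |f x - g x| ∂μ) ^ q :=
        integral_rpow_mul_rpow_le hf_int hd_int hf_ae hd0 hp hq hpq
    _ ≤ (∫ x, |f x - g x| ∂μ) ^ q :=
        mul_le_of_le_one_left (by positivity) (rpow_le_one (integral_nonneg hf0) hf1 hp)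

/-- The key per-set estimate in the proof of Lemma 2.6:
for nonnegative measurable integrable `f, g` with `∫ f ≤ 1`, and `1 ≤ n`, `k ≤ n`,
for every measurable set `E`,
`∫_E f dμ − ∫_E f^(k/n) g^((n−k)/n) dμ ≤ (∫_X |f − g| dμ)^((n−k)/n)`. -/
theorem per_set_estimate {X : Type*} [MeasurableSpace X] (μ : Measure X)
    (f g : X → ℝ) (hf_meas : Measurable f) (hg_meas : Measurable g)
    (hf0 : ∀ x, 0 ≤ f x) (hg0 : ∀ x, 0 ≤ g x)
    (hf_int : Integrable f μ) (hg_int : Integrable g μ)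
    (hf1 : ∫ x, f x ∂μ ≤ 1)
    (n k : ℕ) (hn : 1 ≤ n) (hk : k ≤ n)
    (E : Set X) (hE : MeasurableSet E) :
    (∫ x in E, f x ∂μ) -
        ∫ x in E, f x ^ ((k : ℝ) / n) * g x ^ (((n : ℝ) - k) / n) ∂μ
      ≤ (∫ x, |f x - g x| ∂μ) ^ (((n : ℝ) - k) / n) :=
  per_set_estimate_general μ f g hf0 hg0 hf_int hg_int hf1 n k hn hk E
end

section
/- Let (X, Σ) be a measurable space, μ a measure on X, n ≥ 1 and k integers with 0 ≤ k ≤ n, and f, g : X → ℝ nonnegative measurable functions with ∫_X f dμ = ∫_X g dμ = 1. Let τ be a measure on X with τ(X) = 1 such that ∫_E f^(k/n) · g^((n−k)/n) dμ ≤ τ(E) for every measurable set E ⊆ X. Then for every measurable set E ⊆ X one has |τ(E) − ∫_E f dμ| ≤ (∫_X |f − g| dμ)^((n−k)/n). -/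
open MeasureTheory Real

/-!
Pointwise, `min f g ≤ f ^ a * g ^ b` whenever `a + b = 1`, so `τ` dominates the measure with
density `min f g`. As `τ` and `f • μ` both have mass one, comparing them on `E` and on `Eᶜ`
shows that they differ on `E` by at most `∫ (f - min f g) dμ ≤ ∫ |f - g| dμ`, and trivially
by at most `1`. Finally `min 1 x ≤ x ^ b` for `x ≥ 0` and `b ∈ [0, 1]`.
-/

namespace Real

theorem min_le_rpow_mul_rpow {u v a b : ℝ} (hu : 0 ≤ u) (hv : 0 ≤ v) (ha : 0 ≤ a)
    (hb : 0 ≤ b) (hab : a + b = 1) : min u v ≤ u ^ a * v ^ b := by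
  have hmin : 0 ≤ min u v := le_min hu hv
  calc min u v = min u v ^ a * min u v ^ b := by
        rw [← rpow_add' hmin (by simp [hab]), hab, rpow_one]
    _ ≤ u ^ a * v ^ b :=
        mul_le_mul (rpow_le_rpow hmin (min_le_left u v) ha)
          (rpow_le_rpow hmin (min_le_right u v) hb) (rpow_nonneg hmin b) (rpow_nonneg hu a)

theorem min_one_le_rpow {x b : ℝ} (hx : 0 ≤ x) (hb0 : 0 ≤ b) (hb1 : b ≤ 1) :
    min 1 x ≤ x ^ b := by
  rcases le_total 1 x with h1 | h1
  · exact (min_le_left 1 x).trans (one_le_rpow h1 hb0)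
  · calc min 1 x ≤ x := min_le_right 1 x
      _ = x ^ (1 : ℝ) := (rpow_one x).symm
      _ ≤ x ^ b := rpow_le_rpow_of_exponent_ge' hx h1 hb0 hb1

end Real

namespace MeasureTheory

variable {X : Type*} [MeasurableSpace X] {μ : Measure X}

theorem Integrable.rpow_mul_rpow_s1 {f g : X → ℝ} (hf : Integrable f μ) (hg : Integrable g μ)
    (hf0 : 0 ≤ᵐ[μ] f) (hg0 : 0 ≤ᵐ[μ] g) {a b : ℝ} (ha : 0 ≤ a) (hb : 0 ≤ b)
    (hab : a + b = 1) : Integrable (fun x ↦ f x ^ a * g x ^ b) μ := by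
  have hmeas := (hf.aemeasurable.pow_const a).mul (hg.aemeasurable.pow_const b)
  refine ((hf.const_mul a).add (hg.const_mul b)).mono' hmeas.aestronglyMeasurable ?_
  filter_upwards [hf0, hg0] with x hfx hgx
  rw [norm_of_nonneg (mul_nonneg (rpow_nonneg hfx a) (rpow_nonneg hgx b))]
  exact geom_mean_le_arith_mean2_weighted ha hb hfx hgx hab

theorem setIntegral_sub_integral_sub_le_measureReal {τ : Measure X} {f h : X → ℝ}
    (hf : Integrable f μ) (hh : Integrable h μ) (hhf : h ≤ᵐ[μ] f) {A : Set X}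
    (hτ : ∫ x in A, h x ∂μ ≤ τ.real A) :
    ∫ x in A, f x ∂μ - ∫ x, f x - h x ∂μ ≤ τ.real A := by
  have hsub : ∫ x in A, f x - h x ∂μ ≤ ∫ x, f x - h x ∂μ :=
    setIntegral_le_integral (hf.sub hh) (by filter_upwards [hhf] with x hx using sub_nonneg.2 hx)
  rw [integral_sub hf.integrableOn hh.integrableOn] at hsub
  linarith

theorem abs_measureReal_sub_setIntegral_le {τ : Measure X} [IsProbabilityMeasure τ]
    {f h : X → ℝ} (hf : Integrable f μ) (hf0 : 0 ≤ᵐ[μ] f) (hf1 : ∫ x, f x ∂μ = 1)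
    (hh : Integrable h μ) (hhf : h ≤ᵐ[μ] f)
    (hτ : ∀ A, MeasurableSet A → ∫ x in A, h x ∂μ ≤ τ.real A)
    {E : Set X} (hE : MeasurableSet E) :
    |τ.real E - ∫ x in E, f x ∂μ| ≤ min 1 (∫ x, f x - h x ∂μ) := by
  have hfE : ∫ x in E, f x ∂μ ≤ 1 := hf1 ▸ setIntegral_le_integral hf hf0
  refine le_min (abs_sub_le_of_nonneg_of_le measureReal_nonneg measureReal_le_one
    (setIntegral_nonneg_ae hE (hf0.mono fun x hx _ ↦ hx)) hfE) (abs_sub_le_iff.2 ⟨?_, ?_⟩)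
  · have hc := setIntegral_sub_integral_sub_le_measureReal hf hh hhf (hτ Eᶜ hE.compl)
    rw [probReal_compl_eq_one_sub hE] at hc
    linarith [integral_add_compl hE hf]
  · linarith [setIntegral_sub_integral_sub_le_measureReal hf hh hhf (hτ E hE)]

end MeasureTheory

theorem abstract_lemma_2_6_general {X : Type*} [MeasurableSpace X] (μ : Measure X)
    (n k : ℕ) (hn : 1 ≤ n) (hk : k ≤ n)
    (f g : X → ℝ)
    (hf0 : ∀ x, 0 ≤ f x) (hg0 : ∀ x, 0 ≤ g x)
    (hf_int : Integrable f μ) (hg_int : Integrable g μ)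
    (hf1 : ∫ x, f x ∂μ = 1)
    (τ : Measure X) (hτ1 : τ Set.univ = 1)
    (hdom : ∀ E : Set X, MeasurableSet E →
      ∫ x in E, f x ^ ((k : ℝ) / n) * g x ^ (((n : ℝ) - k) / n) ∂μ ≤ (τ E).toReal)
    (E : Set X) (hE : MeasurableSet E) :
    |(τ E).toReal - ∫ x in E, f x ∂μ|
      ≤ (∫ x, |f x - g x| ∂μ) ^ (((n : ℝ) - k) / n) := by
  have hn0 : (0 : ℝ) < n := by exact_mod_cast hn
  have hkn : (k : ℝ) ≤ n := by exact_mod_cast hk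
  have ha : 0 ≤ (k : ℝ) / n := by positivity
  have hb : 0 ≤ ((n : ℝ) - k) / n := div_nonneg (sub_nonneg.2 hkn) hn0.le
  have hb1 : ((n : ℝ) - k) / n ≤ 1 :=
    (div_le_one hn0).2 (by linarith [k.cast_nonneg (α := ℝ)])
  have hab : (k : ℝ) / n + ((n : ℝ) - k) / n = 1 := by field_simp; ring
  have hmin : Integrable (fun x ↦ min (f x) (g x)) μ := hf_int.inf hg_int
  have hgeom := hf_int.rpow_mul_rpow_s1 hg_int (ae_of_all _ hf0) (ae_of_all _ hg0) ha hb hab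
  have : IsProbabilityMeasure τ := ⟨hτ1⟩
  calc |(τ E).toReal - ∫ x in E, f x ∂μ|
      ≤ min 1 (∫ x, f x - min (f x) (g x) ∂μ) :=
        abs_measureReal_sub_setIntegral_le hf_int (ae_of_all _ hf0) hf1 hmin
          (ae_of_all _ fun x ↦ min_le_left _ _)
          (fun A hA ↦ (setIntegral_mono hmin.integrableOn hgeom.integrableOn
            fun x ↦ min_le_rpow_mul_rpow (hf0 x) (hg0 x) ha hb hab).trans (hdom A hA)) hE
    _ ≤ min 1 (∫ x, |f x - g x| ∂μ) :=
        min_le_min_left 1 <| integral_mono (hf_int.sub hmin) (hf_int.sub hg_int).abs fun x ↦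
          (sub_le_sub_right (le_max_left _ _) _).trans_eq (max_sub_min_eq_abs' _ _)
    _ ≤ _ := min_one_le_rpow (integral_nonneg fun x ↦ abs_nonneg _) hb hb1

/-- Abstract measure-theoretic form of Lemma 2.6: if `f, g ≥ 0` are measurable with
`∫ f dμ = ∫ g dμ = 1`, and `τ` is a measure of total mass `1` dominating the measure
with density `f^(k/n) g^((n−k)/n)` with respect to `μ`, then for every measurable `E`,
`|τ(E) − ∫_E f dμ| ≤ (∫_X |f − g| dμ)^((n−k)/n)`. -/
theorem abstract_lemma_2_6 {X : Type*} [MeasurableSpace X] (μ : Measure X)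
    (n k : ℕ) (hn : 1 ≤ n) (hk : k ≤ n)
    (f g : X → ℝ) (hf_meas : Measurable f) (hg_meas : Measurable g)
    (hf0 : ∀ x, 0 ≤ f x) (hg0 : ∀ x, 0 ≤ g x)
    (hf_int : Integrable f μ) (hg_int : Integrable g μ)
    (hf1 : ∫ x, f x ∂μ = 1) (hg1 : ∫ x, g x ∂μ = 1)
    (τ : Measure X) (hτ1 : τ Set.univ = 1)
    (hdom : ∀ E : Set X, MeasurableSet E →
      ∫ x in E, f x ^ ((k : ℝ) / n) * g x ^ (((n : ℝ) - k) / n) ∂μ ≤ (τ E).toReal)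
    (E : Set X) (hE : MeasurableSet E) :
    |(τ E).toReal - ∫ x in E, f x ∂μ|
      ≤ (∫ x, |f x - g x| ∂μ) ^ (((n : ℝ) - k) / n) :=
  abstract_lemma_2_6_general μ n k hn hk f g hf0 hg0 hf_int hg_int hf1 τ hτ1 hdom E hE
end

section
/- Let μ be a probability measure on a measurable space X (μ(X) = 1), let h : X → ℝ be a measurable function, and let a > 0 and ε₀ > 0 be real numbers. Suppose that μ({x ∈ X : |h(x) − t| ≤ a}) ≤ 1 − 2ε₀ for every t ∈ ℝ. Then there exists c ∈ ℝ such that μ({x ∈ X : h(x) < c + a}) ≤ 1 − ε₀ and μ({x ∈ X : h(x) > c − a}) ≤ 1 − ε₀. -/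
/-!
Take `c = sup {t | μ(h < t + a) ≤ 1 - ε₀}`. Left continuity of `t ↦ μ(h < t)` gives the bound on
the lower tail. For `t > c` we have `μ(h < t + a) > 1 - ε₀`, and since `{h < t + a}` is covered
by `{h < t - a}` and `{|h - t| ≤ a}`, this forces `μ(h < t - a) > ε₀`; letting `t ↓ c` gives
`μ(h ≤ c - a) ≥ ε₀`, which is the bound on the upper tail. Only the law of `h` matters, so the
argument is carried out for a probability measure on `ℝ`, with the one-sided limits taken from
its distribution function.
-/

open MeasureTheory ProbabilityTheory Set Metric

section

variable (ν : Measure ℝ)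

lemma measureReal_Iio_add_le_Iio_sub_add_closedBall [IsFiniteMeasure ν] (t a : ℝ) :
    ν.real (Iio (t + a)) ≤ ν.real (Iio (t - a)) + ν.real (closedBall t a) := by
  have hcover : Iio (t + a) ⊆ Iio (t - a) ∪ closedBall t a := by
    rw [Real.closedBall_eq_Icc]
    exact Iio_subset_Iio_union_Ico.trans (union_subset_union_right _ Ico_subset_Icc_self)
  exact (measureReal_mono hcover).trans (measureReal_union_le _ _)

variable [IsProbabilityMeasure ν]

lemma measureReal_Iio_le_cdf (x : ℝ) : ν.real (Iio x) ≤ cdf ν x := by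
  rw [cdf_eq_real]
  exact measureReal_mono Iio_subset_Iic_self

lemma cdf_le_measureReal_Iio {x y : ℝ} (h : x < y) : cdf ν x ≤ ν.real (Iio y) := by
  rw [cdf_eq_real]
  exact measureReal_mono (Iic_subset_Iio.2 h)

lemma measureReal_Iio_eq_leftLim_cdf (x : ℝ) : ν.real (Iio x) = Function.leftLim (cdf ν) x := by
  have hIio := (cdf ν).measure_Iio (tendsto_cdf_atBot ν) x
  rw [measure_cdf, sub_zero] at hIio
  rw [measureReal_def, hIio,
    ENNReal.toReal_ofReal ((cdf_nonneg ν (x - 1)).trans ((cdf ν).mono.le_leftLim (by linarith)))]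

lemma measureReal_Iio_le_of_forall_lt {x r : ℝ} (h : ∀ y < x, ν.real (Iio y) ≤ r) :
    ν.real (Iio x) ≤ r := by
  rw [measureReal_Iio_eq_leftLim_cdf, (cdf ν).mono.leftLim_eq_sSup]
  refine csSup_le (nonempty_Iio.image _) ?_
  rintro _ ⟨y, hy : y < x, rfl⟩
  obtain ⟨z, hyz, hzx⟩ := exists_between hy
  exact (cdf_le_measureReal_Iio ν hyz).trans (h z hzx)

lemma le_measureReal_Iic_of_forall_gt {x r : ℝ} (h : ∀ y > x, r ≤ ν.real (Iio y)) :
    r ≤ ν.real (Iic x) := by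
  rw [← cdf_eq_real, ← (cdf ν).rightLim_eq, (cdf ν).mono.rightLim_eq_sInf]
  refine le_csInf (nonempty_Ioi.image _) ?_
  rintro _ ⟨y, hy, rfl⟩
  exact (h y hy).trans (measureReal_Iio_le_cdf ν y)

theorem exists_measureReal_Iio_add_le_and_Ioi_sub_le {a ε : ℝ} (hε : 0 < ε)
    (hν : ∀ t, ν.real (closedBall t a) ≤ 1 - 2 * ε) :
    ∃ c, ν.real (Iio (c + a)) ≤ 1 - ε ∧ ν.real (Ioi (c - a)) ≤ 1 - ε := by
  have hε_lt_one : ε < 1 := by linarith [hν 0, measureReal_nonneg (μ := ν) (s := closedBall 0 a)]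
  set S := {t | ν.real (Iio (t + a)) ≤ 1 - ε}
  have hS_nonempty : S.Nonempty := by
    obtain ⟨t, ht⟩ :=
      ((tendsto_cdf_atBot ν).eventually (gt_mem_nhds (by linarith : (0 : ℝ) < 1 - ε))).exists
    refine ⟨t - a, ?_⟩
    simpa only [S, mem_ofPred_eq, sub_add_cancel] using (measureReal_Iio_le_cdf ν t).trans ht.le
  have hS_bdd : BddAbove S := by
    obtain ⟨s, hs⟩ :=
      ((tendsto_cdf_atTop ν).eventually (lt_mem_nhds (by linarith : 1 - ε < 1))).exists
    refine ⟨s - a, fun t (ht : ν.real (Iio (t + a)) ≤ 1 - ε) => ?_⟩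
    by_contra! hst
    linarith [cdf_le_measureReal_Iio ν (show s < t + a by linarith)]
  refine ⟨sSup S, measureReal_Iio_le_of_forall_lt ν fun y hy => ?_, ?_⟩
  · obtain ⟨t, htS, hyt⟩ := exists_lt_of_lt_csSup hS_nonempty (show y - a < sSup S by linarith)
    exact (measureReal_mono (Iio_subset_Iio (by linarith))).trans htS
  · have hlower : ε ≤ ν.real (Iic (sSup S - a)) := by
      refine le_measureReal_Iic_of_forall_gt ν fun y hy => ?_
      have hyS : y + a ∉ S := fun hmem => by linarith [le_csSup hS_bdd hmem]
      have hcover := measureReal_Iio_add_le_Iio_sub_add_closedBall ν (y + a) a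
      rw [add_sub_cancel_right] at hcover
      simp only [S, mem_ofPred_eq, not_le] at hyS
      linarith [hν (y + a)]
    rw [← compl_Iic, probReal_compl_eq_one_sub measurableSet_Iic]
    linarith

end

theorem threshold_selection_general {X : Type*} [MeasurableSpace X]
    (μ : Measure X) [IsProbabilityMeasure μ]
    (h : X → ℝ) (hh : Measurable h)
    (a ε₀ : ℝ) (hε₀ : 0 < ε₀)
    (hyp : ∀ t : ℝ, (μ {x | |h x - t| ≤ a}).toReal ≤ 1 - 2 * ε₀) :
    ∃ c : ℝ, (μ {x | h x < c + a}).toReal ≤ 1 - ε₀ ∧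
      (μ {x | h x > c - a}).toReal ≤ 1 - ε₀ := by
  have := Measure.isProbabilityMeasure_map (μ := μ) hh.aemeasurable
  obtain ⟨c, hlow, hup⟩ := exists_measureReal_Iio_add_le_and_Ioi_sub_le (μ.map h) hε₀ fun t => by
    rw [map_measureReal_apply hh measurableSet_closedBall]
    exact hyp t
  rw [map_measureReal_apply hh measurableSet_Iio] at hlow
  rw [map_measureReal_apply hh measurableSet_Ioi] at hup
  exact ⟨c, hlow, hup⟩

/-- Threshold-selection step in the proof of Theorem 2.5: if `μ` is a probability
measure, `h` is measurable, `a > 0`, `ε₀ > 0`, and for every `t ∈ ℝ` the mass of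
`{|h − t| ≤ a}` is at most `1 − 2ε₀`, then there is `c ∈ ℝ` such that both
`μ({h < c + a}) ≤ 1 − ε₀` and `μ({h > c − a}) ≤ 1 − ε₀`. -/
theorem threshold_selection {X : Type*} [MeasurableSpace X]
    (μ : Measure X) [IsProbabilityMeasure μ]
    (h : X → ℝ) (hh : Measurable h)
    (a ε₀ : ℝ) (ha : 0 < a) (hε₀ : 0 < ε₀)
    (hyp : ∀ t : ℝ, (μ {x | |h x - t| ≤ a}).toReal ≤ 1 - 2 * ε₀) :
    ∃ c : ℝ, (μ {x | h x < c + a}).toReal ≤ 1 - ε₀ ∧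
      (μ {x | h x > c - a}).toReal ≤ 1 - ε₀ :=
  threshold_selection_general μ h hh a ε₀ hε₀ hyp
end
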